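/- (The rank count p-value lies strictly inside the rank envelope p-interval.) Define p_- = #{i ∈ {1, …, s+1} : R_i < R_1}/(s+1), p_+ = #{i ∈ {1, …, s+1} : R_i ≤ R_1}/(s+1), and the rank count p-value p_N = (1 + #{i ∈ {2, …, s+1} : N_i ≺ N_1})/(s+1). Then p_- < p_N ≤ p_+. -/

import Mathlib

open Finset

/-- The upward pointwise rank `R_i^↑(r) = #{j : T_j(r) ≤ T_i(r)}`. -/
noncomputable def upRank {s : ℕ} {ι : Type*} (T : Fin (s + 1) → ι → ℝ) (i : Fin (s + 1)) (r : ι) : ℕ :=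
  {j : Fin (s + 1) | T j r ≤ T i r}.ncard

/-- The downward pointwise rank `R_i^↓(r) = #{j : T_j(r) ≥ T_i(r)}`. -/
noncomputable def downRank {s : ℕ} {ι : Type*} (T : Fin (s + 1) → ι → ℝ) (i : Fin (s + 1)) (r : ι) : ℕ :=
  {j : Fin (s + 1) | T i r ≤ T j r}.ncard

/-- The two-sided pointwise rank `R_i^*(r) = min(R_i^↑(r), R_i^↓(r))`. -/
noncomputable def twoSidedRank {s : ℕ} {ι : Type*} (T : Fin (s + 1) → ι → ℝ) (i : Fin (s + 1)) (r : ι) : ℕ :=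
  min (upRank T i r) (downRank T i r)

/-- The extreme rank `R_i = min_{r ∈ I} R_i^*(r)`. -/
noncomputable def extremeRank {s : ℕ} {ι : Type*} [Fintype ι] [Nonempty ι]
    (T : Fin (s + 1) → ι → ℝ) (i : Fin (s + 1)) : ℕ :=
  univ.inf' univ_nonempty (fun r => twoSidedRank T i r)

/-- The rank count `N_{i,k} = #{r ∈ I : R_i^*(r) = k}`. -/
noncomputable def rankCount {s : ℕ} {ι : Type*} [Fintype ι]
    (T : Fin (s + 1) → ι → ℝ) (i : Fin (s + 1)) (k : ℕ) : ℕ :=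
  {r : ι | twoSidedRank T i r = k}.ncard

/-- The reverse lexical strict order on rank count vectors
`N_i = (N_{i,1}, …, N_{i,K})`, `K = ⌊(s+2)/2⌋`: `N_i ≺ N_j` iff there exists `n ≤ K`
with `N_{i,k} = N_{j,k}` for all `k < n` and `N_{i,n} > N_{j,n}`. -/
def rankCountLT {s : ℕ} {ι : Type*} [Fintype ι]
    (T : Fin (s + 1) → ι → ℝ) (i j : Fin (s + 1)) : Prop :=
  ∃ n : ℕ, 1 ≤ n ∧ n ≤ (s + 2) / 2 ∧
    (∀ k, 1 ≤ k → k < n → rankCount T i k = rankCount T j k) ∧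
    rankCount T j n < rankCount T i n


/-! A curve ranked strictly more extreme than curve `0` (`R_i < R_0`) has all its rank counts
below `R_i` zero and `N_{i,R_i} > 0 = N_{0,R_i}`, so `N_i ≺ N_0` with witness `n = R_i`; conversely
`N_i ≺ N_0` forces `R_i ≤ R_0`, because the first nonzero entry of a rank count vector sits at the
extreme rank. Hence `{R_i < R_0} ⊆ {N_i ≺ N_0}` and `{0} ∪ {N_i ≺ N_0} ⊆ {R_i ≤ R_0}`. -/

section Ranks

variable {s : ℕ} {ι : Type*} (T : Fin (s + 1) → ι → ℝ)

theorem upRank_add_downRank {r : ι} (hr : Function.Injective fun j => T j r) (i : Fin (s + 1)) :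
    upRank T i r + downRank T i r = s + 2 := by
  have hunion : {j | T j r ≤ T i r} ∪ {j | T i r ≤ T j r} = Set.univ := by
    ext j
    simp [le_total (T j r) (T i r)]
  have hinter : {j | T j r ≤ T i r} ∩ {j | T i r ≤ T j r} = {i} := by
    ext j
    simpa only [Set.mem_inter_iff, Set.mem_ofPred_eq, Set.mem_singleton_iff, ← le_antisymm_iff]
      using hr.eq_iff
  have := Set.ncard_union_add_ncard_inter {j | T j r ≤ T i r} {j | T i r ≤ T j r}
  rw [hunion, hinter, Set.ncard_univ, Set.ncard_singleton, Nat.card_eq_fintype_card,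
    Fintype.card_fin] at this
  rw [upRank, downRank]
  omega

theorem one_le_twoSidedRank (i : Fin (s + 1)) (r : ι) : 1 ≤ twoSidedRank T i r :=
  le_min ((Set.ncard_pos (Set.toFinite _)).2 ⟨i, le_refl (T i r)⟩)
    ((Set.ncard_pos (Set.toFinite _)).2 ⟨i, le_refl (T i r)⟩)

theorem twoSidedRank_le_half {r : ι} (hr : Function.Injective fun j => T j r) (i : Fin (s + 1)) :
    twoSidedRank T i r ≤ (s + 2) / 2 := by
  have := upRank_add_downRank T hr i
  rw [twoSidedRank]
  omega

variable [Fintype ι] [Nonempty ι]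

theorem extremeRank_le_twoSidedRank (i : Fin (s + 1)) (r : ι) :
    extremeRank T i ≤ twoSidedRank T i r :=
  inf'_le _ (mem_univ r)

theorem one_le_extremeRank (i : Fin (s + 1)) : 1 ≤ extremeRank T i :=
  (le_inf'_iff _ _).2 fun r _ => one_le_twoSidedRank T i r

theorem extremeRank_le_half (hT : ∀ r, Function.Injective fun j => T j r) (i : Fin (s + 1)) :
    extremeRank T i ≤ (s + 2) / 2 :=
  let r := Classical.arbitrary ι
  (extremeRank_le_twoSidedRank T i r).trans (twoSidedRank_le_half T (hT r) i)

theorem rankCount_eq_zero_of_lt_extremeRank (i : Fin (s + 1)) {k : ℕ} (hk : k < extremeRank T i) :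
    rankCount T i k = 0 := by
  rw [rankCount, Set.ncard_eq_zero]
  refine Set.eq_empty_of_forall_notMem fun r hr => ?_
  have := extremeRank_le_twoSidedRank T i r
  rw [show twoSidedRank T i r = k from hr] at this
  omega

theorem rankCount_extremeRank_pos (i : Fin (s + 1)) : 0 < rankCount T i (extremeRank T i) := by
  obtain ⟨r, -, hr⟩ := exists_mem_eq_inf' univ_nonempty fun r => twoSidedRank T i r
  exact (Set.ncard_pos (Set.toFinite _)).2 ⟨r, hr.symm⟩

theorem rankCountLT_of_extremeRank_lt (hT : ∀ r, Function.Injective fun j => T j r)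
    {i j : Fin (s + 1)} (h : extremeRank T i < extremeRank T j) : rankCountLT T i j := by
  refine ⟨extremeRank T i, one_le_extremeRank T i, extremeRank_le_half T hT i, fun k _ hk => ?_, ?_⟩
  · rw [rankCount_eq_zero_of_lt_extremeRank T i hk,
      rankCount_eq_zero_of_lt_extremeRank T j (hk.trans h)]
  · rw [rankCount_eq_zero_of_lt_extremeRank T j h]
    exact rankCount_extremeRank_pos T i

theorem extremeRank_le_of_rankCountLT {i j : Fin (s + 1)} (h : rankCountLT T i j) :
    extremeRank T i ≤ extremeRank T j := by
  obtain ⟨n, -, -, heq, hlt⟩ := h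
  by_contra! hji
  have hin : extremeRank T i ≤ n := by
    by_contra! hni
    rw [rankCount_eq_zero_of_lt_extremeRank T i hni] at hlt
    omega
  have hj := rankCount_extremeRank_pos T j
  rw [← heq _ (one_le_extremeRank T j) (hji.trans_le hin),
    rankCount_eq_zero_of_lt_extremeRank T i hji] at hj
  omega

end Ranks

theorem rankCount_p_value_between_general
    {s : ℕ} {ι : Type*} [Fintype ι] [Nonempty ι]
    (T : Fin (s + 1) → ι → ℝ)
    (hnoties : ∀ r : ι, ∀ i j : Fin (s + 1), i ≠ j → T i r ≠ T j r) :
    ({i : Fin (s + 1) | extremeRank T i < extremeRank T 0}.ncard : ℝ) / (s + 1) <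
        (1 + ({i : Fin (s + 1) | i ≠ 0 ∧ rankCountLT T i 0}).ncard : ℝ) / (s + 1) ∧
      (1 + ({i : Fin (s + 1) | i ≠ 0 ∧ rankCountLT T i 0}).ncard : ℝ) / (s + 1) ≤
        ({i : Fin (s + 1) | extremeRank T i ≤ extremeRank T 0}.ncard : ℝ) / (s + 1) := by
  have hT : ∀ r, Function.Injective fun j => T j r := fun r i j hij =>
    by_contra fun hne => hnoties r i j hne hij
  set below := {i : Fin (s + 1) | extremeRank T i < extremeRank T 0}
  set precedes := {i : Fin (s + 1) | i ≠ 0 ∧ rankCountLT T i 0}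
  have hbelow : below ⊆ precedes := fun i (hi : extremeRank T i < extremeRank T 0) =>
    ⟨ne_of_apply_ne (extremeRank T) hi.ne, rankCountLT_of_extremeRank_lt T hT hi⟩
  have hprecedes : insert 0 precedes ⊆ {i | extremeRank T i ≤ extremeRank T 0} := by
    rintro i (rfl | ⟨-, hi⟩)
    exacts [le_refl (extremeRank T 0), extremeRank_le_of_rankCountLT T hi]
  have h₁ : below.ncard ≤ precedes.ncard := Set.ncard_le_ncard hbelow
  have h₂ : 1 + precedes.ncard ≤ {i | extremeRank T i ≤ extremeRank T 0}.ncard := by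
    rw [add_comm, ← Set.ncard_insert_of_notMem fun h => h.1 rfl]
    exact Set.ncard_le_ncard hprecedes
  constructor <;> gcongr
  · exact_mod_cast Nat.lt_one_add_iff.2 h₁
  · exact_mod_cast h₂

/-- **The rank count p-value lies strictly inside the rank envelope p-interval.**
With `p_- = #{i : R_i < R_1}/(s+1)`, `p_+ = #{i : R_i ≤ R_1}/(s+1)` and the rank count
p-value `p_N = (1 + #{i ∈ {2,…,s+1} : N_i ≺ N_1})/(s+1)`, it holds that
`p_- < p_N ≤ p_+`. -/
theorem rankCount_p_value_between
    {s : ℕ} (hs : 1 ≤ s) {ι : Type*} [Fintype ι] [Nonempty ι]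
    (T : Fin (s + 1) → ι → ℝ)
    (hnoties : ∀ r : ι, ∀ i j : Fin (s + 1), i ≠ j → T i r ≠ T j r) :
    ({i : Fin (s + 1) | extremeRank T i < extremeRank T 0}.ncard : ℝ) / (s + 1) <
        (1 + ({i : Fin (s + 1) | i ≠ 0 ∧ rankCountLT T i 0}).ncard : ℝ) / (s + 1) ∧
      (1 + ({i : Fin (s + 1) | i ≠ 0 ∧ rankCountLT T i 0}).ncard : ℝ) / (s + 1) ≤
        ({i : Fin (s + 1) | extremeRank T i ≤ extremeRank T 0}.ncard : ℝ) / (s + 1) :=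
  rankCount_p_value_between_general T hnoties
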